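/- arXiv:2109.07189 — 2 statements merged into one kernel-verified Lean document; each statement's English description precedes it below -/
import Mathlib

section
/- Every finite uniquely atomistic lattice is geometric, i.e., it is both semimodular and atomistic. -/
/-!
An atom `a ≤ x` can always be added to a set of atoms with join `x`, so uniqueness forces the
representation of `x` to consist of all atoms below `x`. As the union of representations of `x`
and `y` represents `x ⊔ y`, every atom below `x ⊔ y` lies below `x` or below `y`: atoms are
sup-prime. In an atomistic lattice with sup-prime atoms, if `x ⊓ y ⋖ y` and `x < z < x ⊔ y`,
then `z ⊓ y` is `x ⊓ y` or `y`; the second case gives `x ⊔ y ≤ z`, and in the first every atom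
below `z` lies below `x`, so `z ≤ x`.
-/

section

variable {α : Type*} [Lattice α] [OrderBot α]

variable (α) in
def IsUniquelyAtomistic : Prop :=
  ∀ x : α, ∃! S : Finset α, (∀ a ∈ S, IsAtom a) ∧ x = S.sup id

theorem le_of_forall_isAtom_le
    (hat : ∀ x : α, ∃ S : Finset α, (∀ a ∈ S, IsAtom a) ∧ x = S.sup id) {x y : α}
    (h : ∀ a, IsAtom a → a ≤ x → a ≤ y) : x ≤ y := by
  obtain ⟨S, hS, rfl⟩ := hat x
  exact Finset.sup_le fun a ha => h a (hS a ha) (Finset.le_sup (f := id) ha)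

theorem isUpperModularLattice_of_forall_isAtom_supPrime
    (hat : ∀ x : α, ∃ S : Finset α, (∀ a ∈ S, IsAtom a) ∧ x = S.sup id)
    (hprime : ∀ a : α, IsAtom a → SupPrime a) : IsUpperModularLattice α where
  covBy_sup_of_inf_covBy {y x} hcov := by
    rw [inf_comm] at hcov
    rw [sup_comm]
    have hlt : x < x ⊔ y := left_lt_sup.mpr fun hyx => hcov.lt.ne (inf_eq_right.mpr hyx)
    refine ⟨hlt, fun z hxz hzxy => ?_⟩
    have hinf : x ⊓ y ≤ z ⊓ y := inf_le_inf_right y hxz.le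
    rcases hcov.eq_or_eq hinf inf_le_right with hzy | hzy
    · refine hxz.not_ge (le_of_forall_isAtom_le hat fun a ha haz => ?_)
      rcases (hprime a ha).2 (haz.trans hzxy.le) with hax | hay
      · exact hax
      · exact (hzy ▸ le_inf haz hay).trans inf_le_left
    · exact hzxy.not_ge (sup_le hxz.le (hzy ▸ inf_le_left))

namespace IsUniquelyAtomistic

theorem mem_of_isAtom_le (h : IsUniquelyAtomistic α) {S : Finset α} (hS : ∀ a ∈ S, IsAtom a)
    {a : α} (ha : IsAtom a) (haS : a ≤ S.sup id) : a ∈ S := by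
  classical
  have hins : insert a S = S :=
    (h (S.sup id)).unique
      ⟨by simpa [ha] using hS, by rw [Finset.sup_insert, id, sup_eq_right.mpr haS]⟩
      ⟨hS, rfl⟩
  exact hins ▸ Finset.mem_insert_self a S

theorem supPrime_of_isAtom (h : IsUniquelyAtomistic α) {a : α} (ha : IsAtom a) : SupPrime a := by
  classical
  refine ⟨fun hmin => ha.1 hmin.eq_bot, fun x y haxy => ?_⟩
  obtain ⟨⟨S, hS, rfl⟩, ⟨T, hT, rfl⟩⟩ := (h x).exists, (h y).exists
  have hST : ∀ b ∈ S ∪ T, IsAtom b := by simpa [or_imp, forall_and] using ⟨hS, hT⟩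
  have haST : a ∈ S ∪ T := h.mem_of_isAtom_le hST ha (by rwa [Finset.sup_union])
  rcases Finset.mem_union.mp haST with haS | haT
  · exact .inl (Finset.le_sup (f := id) haS)
  · exact .inr (Finset.le_sup (f := id) haT)

theorem isUpperModularLattice (h : IsUniquelyAtomistic α) : IsUpperModularLattice α :=
  isUpperModularLattice_of_forall_isAtom_supPrime (fun x => (h x).exists)
    fun _ => h.supPrime_of_isAtom

end IsUniquelyAtomistic

end

theorem geometric_of_uniquelyAtomistic_general
    {α : Type*} [Lattice α] [OrderBot α]
    (hua : ∀ x : α, ∃! S : Finset α, (∀ a ∈ S, IsAtom a) ∧ x = S.sup id) :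
    (∀ x y : α, x ⊓ y ⋖ x → x ⊓ y ⋖ y → (x ⋖ x ⊔ y ∧ y ⋖ x ⊔ y)) ∧
    (∀ x : α, ∃ S : Finset α, (∀ a ∈ S, IsAtom a) ∧ x = S.sup id) := by
  have := IsUniquelyAtomistic.isUpperModularLattice hua
  exact ⟨fun x y hx hy => ⟨covBy_sup_of_inf_covBy_right hy, covBy_sup_of_inf_covBy_left hx⟩,
    fun x => (hua x).exists⟩

/-- Every finite uniquely atomistic lattice is geometric, i.e.
both semimodular (if `x ⊓ y` is covered by both `x` and `y`, then `x ⊔ y` covers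
both `x` and `y`) and atomistic (every element is a join of atoms). -/
theorem geometric_of_uniquelyAtomistic
    {α : Type*} [Lattice α] [OrderBot α] [Fintype α]
    (hua : ∀ x : α, ∃! S : Finset α, (∀ a ∈ S, IsAtom a) ∧ x = S.sup id) :
    (∀ x y : α, x ⊓ y ⋖ x → x ⊓ y ⋖ y → (x ⋖ x ⊔ y ∧ y ⋖ x ⊔ y)) ∧
    (∀ x : α, ∃ S : Finset α, (∀ a ∈ S, IsAtom a) ∧ x = S.sup id) :=
  geometric_of_uniquelyAtomistic_general hua
end

section
/- Let q be a prime power and n a positive integer. A subset U ⊆ P_q(n) containing the zero subspace {0} and closed under subspace sum and intersection (i.e., a sublattice of the linear lattice P_q(n)) that is atomistic and distributive as a lattice and admits a complement function f : U → U, is a linear code closed under intersection with F_q^n ∈ U; conversely, every linear code in P_q(n) closed under intersection with F_q^n ∈ U is an atomistic distributive sublattice of P_q(n) on which a complement function exists. -/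
open Module

/-- The subspace distance `d_S(X, Y) = dim(X + Y) - dim(X ∩ Y)`. -/
noncomputable def subspaceDist {F V : Type*} [Field F] [AddCommGroup V] [Module F V]
    (X Y : Submodule F V) : ℕ :=
  finrank F ↥(X ⊔ Y) - finrank F ↥(X ⊓ Y)

/-- `U ⊆ P_q(n)` is a linear code: `{0} ∈ U` and there is an operation `⊞` on `U`
making it an abelian group with identity `{0}`, every element self-inverse, and the
subspace distance translation invariant. -/
def IsLinearCode {F V : Type*} [Field F] [AddCommGroup V] [Module F V]
    (U : Set (Submodule F V)) : Prop :=
  ∃ (h0 : ⊥ ∈ U) (op : U → U → U),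
    (∀ X Y, op X Y = op Y X) ∧
    (∀ X Y Z, op (op X Y) Z = op X (op Y Z)) ∧
    (∀ X, op X ⟨⊥, h0⟩ = X) ∧
    (∀ X, op X X = ⟨⊥, h0⟩) ∧
    (∀ X Y W, subspaceDist (op X W : Submodule F V) (op Y W : Submodule F V) =
      subspaceDist (X : Submodule F V) (Y : Submodule F V))

/-- `f : U → U` is a complement function on `U ⊆ P_q(n)`: for every `X ∈ U`,
`X ∩ f(X) = {0}` and `X + f(X) = F_q^n`, `dim f(X) = n - dim X`, `f(f(X)) = X`, and
`f` preserves the subspace distance. -/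
def IsComplementFun {F V : Type*} [Field F] [AddCommGroup V] [Module F V]
    (n : ℕ) (U : Set (Submodule F V)) (f : U → U) : Prop :=
  (∀ X : U, (X : Submodule F V) ⊓ (f X : Submodule F V) = ⊥ ∧
    (X : Submodule F V) ⊔ (f X : Submodule F V) = ⊤) ∧
  (∀ X : U, finrank F ↥(f X : Submodule F V) = n - finrank F ↥(X : Submodule F V)) ∧
  (∀ X : U, f (f X) = X) ∧
  (∀ X Y : U, subspaceDist (f X : Submodule F V) (f Y : Submodule F V) =
    subspaceDist (X : Submodule F V) (Y : Submodule F V))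

/-!
If `U` is an atomistic distributive sublattice, distributivity gives `A ∩ (B₁ + ⋯ + B_k) = {0}`
for every atom `A` outside a family of atoms `B_i`. Hence each element of `U` is the direct sum
of a unique finite set of atoms, `U` is the Boolean lattice of these sets, and `d_S(X, Y)` is the
total dimension of the atoms in the symmetric difference of the sets of `X` and `Y`; so taking
`X ⊞ Y` to be the sum of that symmetric difference makes `U` a linear code. The complement of
`{0}` is `F_q^n`.

Conversely, in a linear code `dim (X ⊞ Y) = d_S(X, Y)`, and translation invariance shows that
`X ⊞ Y` is a complement of `X` in `Y` whenever `X ≤ Y`, and that `X ⊞ Y = X + Y` whenever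
`X ∩ Y = {0}`. With closure under intersection this yields closure under sums, atomisticity
(split off one atom at a time) and independence of the atoms, from which distributivity follows
as above; `X ↦ X ⊞ F_q^n` is a complement function.
-/

section SubspaceDist

variable {F V : Type*} [Field F] [AddCommGroup V] [Module F V]

theorem subspaceDist_bot_right (X : Submodule F V) : subspaceDist X ⊥ = finrank F X := by
  rw [subspaceDist, sup_bot_eq, inf_bot_eq, finrank_bot, Nat.sub_zero]

theorem subspaceDist_comm (X Y : Submodule F V) : subspaceDist X Y = subspaceDist Y X := by
  rw [subspaceDist, subspaceDist, sup_comm, inf_comm]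

variable [FiniteDimensional F V]

theorem finrank_sup_eq_add_of_inf_eq_bot {X Y : Submodule F V} (h : X ⊓ Y = ⊥) :
    finrank F ↥(X ⊔ Y) = finrank F X + finrank F Y := by
  rw [← Submodule.finrank_sup_add_finrank_inf_eq, h, finrank_bot, add_zero]

theorem subspaceDist_add_two_mul_finrank_inf (X Y : Submodule F V) :
    subspaceDist X Y + 2 * finrank F ↥(X ⊓ Y) = finrank F X + finrank F Y := by
  have := Submodule.finrank_sup_add_finrank_inf_eq X Y
  have := Submodule.finrank_mono (inf_le_left.trans le_sup_left : X ⊓ Y ≤ X ⊔ Y)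
  unfold subspaceDist
  omega

theorem subspaceDist_eq_add_iff_inf_eq_bot {X Y : Submodule F V} :
    subspaceDist X Y = finrank F X + finrank F Y ↔ X ⊓ Y = ⊥ := by
  have := subspaceDist_add_two_mul_finrank_inf X Y
  rw [← Submodule.finrank_eq_zero]
  omega

theorem subspaceDist_add_finrank_eq_iff_le {X Y : Submodule F V} :
    subspaceDist X Y + finrank F X = finrank F Y ↔ X ≤ Y := by
  have hd := subspaceDist_add_two_mul_finrank_inf X Y
  rw [← inf_eq_left]
  constructor
  · intro h
    exact Submodule.eq_of_le_of_finrank_le inf_le_left (by omega)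
  · intro h
    rw [h] at hd
    omega

end SubspaceDist

section LatticeAtoms

variable {α : Type*} [Lattice α]

theorem inf_sup_left_of_sup_inf_left {U : Set α} (hinf : InfClosed U)
    (hdistr : ∀ X ∈ U, ∀ Y ∈ U, ∀ Z ∈ U, X ⊔ (Y ⊓ Z) = (X ⊔ Y) ⊓ (X ⊔ Z))
    {X Y Z : α} (hX : X ∈ U) (hY : Y ∈ U) (hZ : Z ∈ U) :
    X ⊓ (Y ⊔ Z) = X ⊓ Y ⊔ X ⊓ Z :=
  calc X ⊓ (Y ⊔ Z) = X ⊓ ((Z ⊔ X) ⊓ (Z ⊔ Y)) := by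
        rw [← inf_assoc, sup_comm Z X, inf_sup_self, sup_comm]
    _ = X ⊓ (X ⊓ Y ⊔ Z) := by rw [← hdistr Z hZ X hX Y hY, sup_comm]
    _ = X ⊓ Y ⊔ X ⊓ Z := by
        rw [hdistr _ (hinf hX hY) X hX Z hZ, sup_comm (X ⊓ Y) X, sup_inf_self]

variable [OrderBot α] {U : Set α}

def IsAtomOf (U : Set α) (A : α) : Prop :=
  A ∈ U ∧ ⊥ < A ∧ ∀ B ∈ U, ⊥ < B → ¬ B < A

def IsAtomisticSet (U : Set α) : Prop :=
  ∀ X ∈ U, ∃ S : Finset α, (∀ A ∈ S, IsAtomOf U A) ∧ X = S.sup id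

def AtomsIndependent (U : Set α) : Prop :=
  ∀ S : Finset α, (∀ A ∈ S, IsAtomOf U A) →
    ∀ A, IsAtomOf U A → A ∉ S → A ⊓ S.sup id = ⊥

theorem IsAtomOf.ne_bot {A : α} (hA : IsAtomOf U A) : A ≠ ⊥ :=
  hA.2.1.ne'

theorem IsAtomOf.inf_eq_bot_of_not_le (hinf : InfClosed U) {A X : α}
    (hA : IsAtomOf U A) (hX : X ∈ U) (h : ¬ A ≤ X) : A ⊓ X = ⊥ := by
  by_contra hne
  exact hA.2.2 _ (hinf hA.1 hX) (bot_lt_iff_ne_bot.mpr hne)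
    (inf_le_left.lt_of_ne fun he => h (inf_eq_left.mp he))

theorem IsAtomOf.inf_eq_bot_of_ne (hinf : InfClosed U) {A B : α}
    (hA : IsAtomOf U A) (hB : IsAtomOf U B) (hne : A ≠ B) : A ⊓ B = ⊥ :=
  hA.inf_eq_bot_of_not_le hinf hB.1 fun hle => hB.2.2 A hA.1 hA.2.1 (hle.lt_of_ne hne)

theorem exists_isAtomOf_le [WellFoundedLT α] {X : α} (hX : X ∈ U)
    (hne : X ≠ ⊥) : ∃ A, IsAtomOf U A ∧ A ≤ X := by
  obtain ⟨A, hA⟩ := exists_minimal_of_wellFoundedLT (fun B => B ∈ U ∧ ⊥ < B ∧ B ≤ X)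
    ⟨X, hX, bot_lt_iff_ne_bot.mpr hne, le_rfl⟩
  refine ⟨A, ⟨hA.prop.1, hA.prop.2.1, fun B hB hBpos hBA => ?_⟩, hA.prop.2.2⟩
  exact hA.not_lt ⟨hB, hBpos, hBA.le.trans hA.prop.2.2⟩ hBA

theorem finsetSup_mem (h0 : ⊥ ∈ U) (hsup : SupClosed U) {S : Finset α}
    (hS : ∀ A ∈ S, A ∈ U) : S.sup id ∈ U := by
  rcases S.eq_empty_or_nonempty with rfl | hne
  · exact h0
  · exact hsup.finsetSup_mem hne hS

theorem atomsIndependent_of_sup_inf_left (h0 : ⊥ ∈ U) (hsup : SupClosed U)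
    (hinf : InfClosed U)
    (hdistr : ∀ X ∈ U, ∀ Y ∈ U, ∀ Z ∈ U, X ⊔ (Y ⊓ Z) = (X ⊔ Y) ⊓ (X ⊔ Z)) :
    AtomsIndependent U := by
  classical
  intro S hS A hA hAS
  induction S using Finset.induction_on with
  | empty => simp
  | insert B S _ ih =>
    rw [Finset.forall_mem_insert] at hS
    rw [Finset.mem_insert, not_or] at hAS
    rw [Finset.sup_insert, id, inf_sup_left_of_sup_inf_left hinf hdistr hA.1 hS.1.1
      (finsetSup_mem h0 hsup fun C hC => (hS.2 C hC).1), hA.inf_eq_bot_of_ne hinf hS.1 hAS.1,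
      ih hS.2 hAS.2, sup_bot_eq]

variable (hind : AtomsIndependent U)
include hind

theorem AtomsIndependent.not_le_finsetSup {S : Finset α}
    (hS : ∀ A ∈ S, IsAtomOf U A) {A : α} (hA : IsAtomOf U A) (hAS : A ∉ S) :
    ¬ A ≤ S.sup id := fun hle =>
  hA.ne_bot (by rw [← inf_eq_left.mpr hle, hind S hS A hA hAS])

theorem AtomsIndependent.eq_of_finsetSup_eq {S T : Finset α}
    (hS : ∀ A ∈ S, IsAtomOf U A) (hT : ∀ A ∈ T, IsAtomOf U A) (h : S.sup id = T.sup id) :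
    S = T := by
  ext A
  constructor
  · intro hA
    by_contra hAT
    exact hind.not_le_finsetSup hT (hS A hA) hAT (h ▸ Finset.le_sup (f := id) hA)
  · intro hA
    by_contra hAS
    exact hind.not_le_finsetSup hS (hT A hA) hAS (h ▸ Finset.le_sup (f := id) hA)

variable (h0 : ⊥ ∈ U) (hsup : SupClosed U) (hinf : InfClosed U) (hatom : IsAtomisticSet U)
include h0 hsup hinf hatom

theorem AtomsIndependent.finsetSup_inf_finsetSup [DecidableEq α]
    {S T : Finset α} (hS : ∀ A ∈ S, IsAtomOf U A) (hT : ∀ A ∈ T, IsAtomOf U A) :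
    S.sup id ⊓ T.sup id = (S ∩ T).sup id := by
  refine le_antisymm ?_ (le_inf (Finset.sup_mono Finset.inter_subset_left)
    (Finset.sup_mono Finset.inter_subset_right))
  obtain ⟨W, hW, hWeq⟩ := hatom _ (hinf (finsetSup_mem h0 hsup fun A hA => (hS A hA).1)
    (finsetSup_mem h0 hsup fun A hA => (hT A hA).1))
  have hWle : ∀ A ∈ W, A ≤ S.sup id ⊓ T.sup id := fun A hA =>
    hWeq ▸ Finset.le_sup (f := id) hA
  rw [hWeq]
  refine Finset.sup_le fun A hAW => Finset.le_sup (f := id) (Finset.mem_inter.mpr ⟨?_, ?_⟩) <;>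
    by_contra hA
  · exact hind.not_le_finsetSup hS (hW A hAW) hA ((hWle A hAW).trans inf_le_left)
  · exact hind.not_le_finsetSup hT (hW A hAW) hA ((hWle A hAW).trans inf_le_right)

theorem AtomsIndependent.sup_inf_left :
    ∀ X ∈ U, ∀ Y ∈ U, ∀ Z ∈ U, X ⊔ (Y ⊓ Z) = (X ⊔ Y) ⊓ (X ⊔ Z) := by
  classical
  intro X hX Y hY Z hZ
  obtain ⟨R, hR, rfl⟩ := hatom X hX
  obtain ⟨S, hS, rfl⟩ := hatom Y hY
  obtain ⟨T, hT, rfl⟩ := hatom Z hZ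
  have hRS : ∀ A ∈ R ∪ S, IsAtomOf U A := by
    simpa only [Finset.forall_mem_union] using ⟨hR, hS⟩
  have hRT : ∀ A ∈ R ∪ T, IsAtomOf U A := by
    simpa only [Finset.forall_mem_union] using ⟨hR, hT⟩
  rw [hind.finsetSup_inf_finsetSup h0 hsup hinf hatom hS hT, ← Finset.sup_union,
    ← Finset.sup_union, ← Finset.sup_union,
    hind.finsetSup_inf_finsetSup h0 hsup hinf hatom hRS hRT, Finset.union_inter_distrib_left]

end LatticeAtoms

section SubspaceAtoms

variable {F V : Type*} [Field F] [AddCommGroup V] [Module F V] [FiniteDimensional F V]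
  {U : Set (Submodule F V)}

theorem IsAtomOf.finrank_pos {A : Submodule F V}
    (hA : IsAtomOf U A) : 0 < finrank F A :=
  Nat.pos_of_ne_zero fun h => hA.ne_bot (Submodule.finrank_eq_zero.mp h)

theorem AtomsIndependent.finrank_finsetSup (hind : AtomsIndependent U)
    {S : Finset (Submodule F V)} (hS : ∀ A ∈ S, IsAtomOf U A) :
    finrank F ↥(S.sup id) = ∑ A ∈ S, finrank F A := by
  classical
  induction S using Finset.induction_on with
  | empty => simp
  | insert B S hBS ih =>
    rw [Finset.forall_mem_insert] at hS
    rw [Finset.sup_insert, Finset.sum_insert hBS, id,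
      finrank_sup_eq_add_of_inf_eq_bot (hind S hS.2 B hS.1 hBS), ih hS.2]

variable (h0 : ⊥ ∈ U) (hsup : SupClosed U) (hinf : InfClosed U) (hatom : IsAtomisticSet U)
  (hind : AtomsIndependent U)
include h0 hsup hinf hatom hind

theorem AtomsIndependent.subspaceDist_finsetSup [DecidableEq (Submodule F V)]
    {S T : Finset (Submodule F V)} (hS : ∀ A ∈ S, IsAtomOf U A)
    (hT : ∀ A ∈ T, IsAtomOf U A) :
    subspaceDist (S.sup id) (T.sup id) = ∑ A ∈ symmDiff S T, finrank F A := by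
  have hST : ∀ A ∈ S ∪ T, IsAtomOf U A := by
    simpa only [Finset.forall_mem_union] using ⟨hS, hT⟩
  have hsplit : S ∪ T = symmDiff S T ∪ S ∩ T := (symmDiff_sup_inf S T).symm
  have hdisj : Disjoint (symmDiff S T) (S ∩ T) := disjoint_symmDiff_inf S T
  rw [subspaceDist, ← Finset.sup_union, hind.finsetSup_inf_finsetSup h0 hsup hinf hatom hS hT,
    hind.finrank_finsetSup hST, hind.finrank_finsetSup fun A hA => hS A (Finset.mem_inter.mp hA).1,
    hsplit, Finset.sum_union hdisj, Nat.add_sub_cancel]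

theorem AtomsIndependent.isLinearCode : IsLinearCode U := by
  classical
  choose D hDatom hD using id hatom
  have hDeq : ∀ (X : U) {S}, (∀ A ∈ S, IsAtomOf U A) → (X : Submodule F V) = S.sup id →
      D X X.2 = S := fun X S hS hX =>
    hind.eq_of_finsetSup_eq (hDatom X X.2) hS ((hD X X.2).symm.trans hX)
  have hΔ : ∀ X Y : U, ∀ A ∈ symmDiff (D X X.2) (D Y Y.2), IsAtomOf U A := fun X Y A hA => by
    rcases Finset.mem_symmDiff.mp hA with ⟨hA, -⟩ | ⟨hA, -⟩
    exacts [hDatom X X.2 A hA, hDatom Y Y.2 A hA]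
  let op : U → U → U := fun X Y =>
    ⟨(symmDiff (D X X.2) (D Y Y.2)).sup id, finsetSup_mem h0 hsup fun A hA => (hΔ X Y A hA).1⟩
  have hDop : ∀ X Y : U, D (op X Y) (op X Y).2 = symmDiff (D X X.2) (D Y Y.2) := fun X Y =>
    hDeq _ (hΔ X Y) rfl
  have hDbot : D ⊥ h0 = ∅ := hDeq ⟨⊥, h0⟩ (by simp) (by simp)
  refine ⟨h0, op, fun X Y => ?_, fun X Y Z => ?_, fun X => ?_, fun X => ?_, fun X Y W => ?_⟩
  · exact Subtype.ext (by simp only [op, symmDiff_comm])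
  · exact Subtype.ext (by simp only [op, hDop, symmDiff_assoc])
  · refine Subtype.ext ?_
    simp only [op, hDbot]
    rw [← Finset.bot_eq_empty, symmDiff_bot, ← hD]
  · exact Subtype.ext (by simp [op])
  · have hdist := hind.subspaceDist_finsetSup h0 hsup hinf hatom (hΔ X W) (hΔ Y W)
    rwa [symmDiff_symmDiff_symmDiff_comm, symmDiff_self, symmDiff_bot,
      ← hind.subspaceDist_finsetSup h0 hsup hinf hatom (hDatom X X.2) (hDatom Y Y.2), ← hD,
      ← hD] at hdist

end SubspaceAtoms

structure LinearCodeOp {F V : Type*} [Field F] [AddCommGroup V] [Module F V]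
    (U : Set (Submodule F V)) where
  bot_mem : ⊥ ∈ U
  op : U → U → U
  op_comm : ∀ X Y, op X Y = op Y X
  op_assoc : ∀ X Y Z, op (op X Y) Z = op X (op Y Z)
  op_bot : ∀ X, op X ⟨⊥, bot_mem⟩ = X
  op_self : ∀ X, op X X = ⟨⊥, bot_mem⟩
  subspaceDist_op_op : ∀ X Y W,
    subspaceDist (op X W : Submodule F V) (op Y W) = subspaceDist (X : Submodule F V) Y

theorem IsLinearCode.nonempty_linearCodeOp {F V : Type*} [Field F] [AddCommGroup V]
    [Module F V] {U : Set (Submodule F V)} (h : IsLinearCode U) : Nonempty (LinearCodeOp U) :=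
  let ⟨h0, op, h₁, h₂, h₃, h₄, h₅⟩ := h
  ⟨⟨h0, op, h₁, h₂, h₃, h₄, h₅⟩⟩

namespace LinearCodeOp

variable {F V : Type*} [Field F] [AddCommGroup V] [Module F V] {U : Set (Submodule F V)}
  (c : LinearCodeOp U)

-- the paper's `⊞`, a symbol Mathlib reserves for biproducts
local infixl:65 " ⊡ " => c.op

theorem op_op_cancel_right (X Y : U) : X ⊡ Y ⊡ Y = X := by
  rw [c.op_assoc, c.op_self, c.op_bot]

theorem op_op_cancel_left (X Y : U) : X ⊡ (X ⊡ Y) = Y := by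
  rw [← c.op_assoc, c.op_self, c.op_comm, c.op_bot]

theorem op_right_cancel {X Y W : U} (h : X ⊡ W = Y ⊡ W) : X = Y := by
  rw [← c.op_op_cancel_right X W, h, c.op_op_cancel_right]

theorem finrank_op (X Y : U) :
    finrank F ↥(X ⊡ Y : Submodule F V) = subspaceDist (X : Submodule F V) Y := by
  rw [← subspaceDist_bot_right, ← c.subspaceDist_op_op X Y Y, c.op_self]

theorem subspaceDist_op_left (X Y : U) :
    subspaceDist (X ⊡ Y : Submodule F V) X = finrank F Y := by
  have h := c.subspaceDist_op_op Y ⟨⊥, c.bot_mem⟩ X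
  rwa [c.op_comm Y X, c.op_comm _ X, c.op_bot, subspaceDist_bot_right] at h

theorem subspaceDist_op_right (X Y : U) :
    subspaceDist (X ⊡ Y : Submodule F V) Y = finrank F X := by
  rw [c.op_comm]
  exact c.subspaceDist_op_left Y X

variable [FiniteDimensional F V]

theorem op_le_of_le {X Y : U} (h : (X : Submodule F V) ≤ Y) : (X ⊡ Y : Submodule F V) ≤ Y :=
  subspaceDist_add_finrank_eq_iff_le.mp <| by
    rw [c.subspaceDist_op_right, c.finrank_op, add_comm, subspaceDist_add_finrank_eq_iff_le.mpr h]

theorem op_inf_eq_bot_of_le {X Y : U} (h : (X : Submodule F V) ≤ Y) :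
    (X ⊡ Y : Submodule F V) ⊓ X = ⊥ :=
  subspaceDist_eq_add_iff_inf_eq_bot.mp <| by
    rw [c.subspaceDist_op_left, c.finrank_op, subspaceDist_add_finrank_eq_iff_le.mpr h]

theorem op_sup_eq_of_le {X Y : U} (h : (X : Submodule F V) ≤ Y) :
    (X ⊡ Y : Submodule F V) ⊔ X = Y :=
  Submodule.eq_of_le_of_finrank_le (sup_le (c.op_le_of_le h) h) <| by
    rw [finrank_sup_eq_add_of_inf_eq_bot (c.op_inf_eq_bot_of_le h), c.finrank_op,
      subspaceDist_add_finrank_eq_iff_le.mpr h]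

theorem op_eq_sup_of_inf_eq_bot {X Y : U} (h : (X : Submodule F V) ⊓ Y = ⊥) :
    (X ⊡ Y : Submodule F V) = (X : Submodule F V) ⊔ Y := by
  have hdim : finrank F ↥(X ⊡ Y : Submodule F V) = finrank F X + finrank F Y := by
    rw [c.finrank_op, subspaceDist_eq_add_iff_inf_eq_bot.mpr h]
  have hX : (X : Submodule F V) ≤ X ⊡ Y := subspaceDist_add_finrank_eq_iff_le.mp <| by
    rw [subspaceDist_comm, c.subspaceDist_op_left, hdim, add_comm]
  have hY : (Y : Submodule F V) ≤ X ⊡ Y := subspaceDist_add_finrank_eq_iff_le.mp <| by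
    rw [subspaceDist_comm, c.subspaceDist_op_right, hdim]
  exact (Submodule.eq_of_le_of_finrank_le (sup_le hX hY) <| by
    rw [hdim, finrank_sup_eq_add_of_inf_eq_bot h]).symm

include c in
theorem supClosed (hinf : InfClosed U) : SupClosed U := by
  -- `X + Y = X ⊡ Y'`, where `Y'` is the complement of `X ∩ Y` in `Y`
  intro X hX Y hY
  set W : U := ⟨X ⊓ Y, hinf hX hY⟩
  set Y' := W ⊡ ⟨Y, hY⟩
  have hWY : (W : Submodule F V) ≤ Y := inf_le_right
  have hXY' : X ⊓ (Y' : Submodule F V) = ⊥ := by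
    have h : X ⊓ (Y' : Submodule F V) ≤ (Y' : Submodule F V) ⊓ W :=
      le_inf inf_le_right (le_inf inf_le_left (inf_le_right.trans (c.op_le_of_le hWY)))
    rwa [c.op_inf_eq_bot_of_le hWY, le_bot_iff] at h
  have hY' : Y = (Y' : Submodule F V) ⊔ W := (c.op_sup_eq_of_le (Y := ⟨Y, hY⟩) hWY).symm
  have h : X ⊔ Y = ((⟨X, hX⟩ ⊡ Y' : U) : Submodule F V) := by
    rw [c.op_eq_sup_of_inf_eq_bot hXY', hY', sup_comm _ (W : Submodule F V), ← sup_assoc,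
      sup_eq_left.mpr (inf_le_left : (W : Submodule F V) ≤ X)]
  exact h ▸ (⟨X, hX⟩ ⊡ Y').2

theorem isComplementFun_op_top {n : ℕ} (hV : finrank F V = n) (htop : ⊤ ∈ U) :
    IsComplementFun n U (· ⊡ ⟨⊤, htop⟩) := by
  have hle : ∀ X : U, (X : Submodule F V) ≤ (⟨⊤, htop⟩ : U) := fun X => le_top
  refine ⟨fun X => ⟨?_, ?_⟩, fun X => ?_, fun X => c.op_op_cancel_right X _,
    fun X Y => c.subspaceDist_op_op X Y _⟩
  · rw [inf_comm]
    exact c.op_inf_eq_bot_of_le (hle X)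
  · rw [sup_comm]
    exact c.op_sup_eq_of_le (hle X)
  · rw [c.finrank_op, ← hV, ← finrank_top F V,
      ← subspaceDist_add_finrank_eq_iff_le.mpr (hle X), Nat.add_sub_cancel]

include c in
theorem isAtomisticSet : IsAtomisticSet U := by
  classical
  intro X hX
  induction hk : finrank F X using Nat.strong_induction_on generalizing X with
  | _ k ih =>
  rcases eq_or_ne X ⊥ with rfl | hne
  · exact ⟨∅, by simp, by simp⟩
  obtain ⟨A, hA, hAX⟩ := exists_isAtomOf_le hX hne
  set Z := (⟨A, hA.1⟩ : U) ⊡ ⟨X, hX⟩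
  have hZ : finrank F Z < k := by
    have := subspaceDist_add_finrank_eq_iff_le.mpr hAX
    have := hA.finrank_pos
    rw [c.finrank_op]
    dsimp only
    omega
  obtain ⟨S, hS, hZS⟩ := ih _ hZ _ Z.2 rfl
  refine ⟨insert A S, (Finset.forall_mem_insert _ _ _).mpr ⟨hA, hS⟩, ?_⟩
  rw [Finset.sup_insert, id, ← hZS, sup_comm]
  exact (c.op_sup_eq_of_le (X := ⟨A, hA.1⟩) (Y := ⟨X, hX⟩) hAX).symm

include c in
theorem atomsIndependent (hinf : InfClosed U) : AtomsIndependent U := by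
  -- If `A ≤ P := ⊔ S`, let `D` be the complement of `A` in `P` and `B ∈ S` an atom not below `D`.
  -- Either `B ⊔ D = P = A ⊡ D`, so `B = A`, or `A`, `B`, `D` are independent subspaces of `P`,
  -- too large since `dim P = dim D + dim A`.
  intro S hS A hA hAS
  have hP : S.sup id ∈ U := finsetSup_mem c.bot_mem (c.supClosed hinf) fun B hB => (hS B hB).1
  refine hA.inf_eq_bot_of_not_le hinf hP fun hAP => ?_
  set D := (⟨A, hA.1⟩ : U) ⊡ ⟨S.sup id, hP⟩ with hDdef
  have hDA : (D : Submodule F V) ⊓ A = ⊥ := c.op_inf_eq_bot_of_le hAP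
  have hDP : (D : Submodule F V) ⊔ A = S.sup id := c.op_sup_eq_of_le hAP
  have hdimP : finrank F ↥(S.sup id) = finrank F D + finrank F A := by
    rw [← hDP, finrank_sup_eq_add_of_inf_eq_bot hDA]
  obtain ⟨B, hBS, hBD⟩ : ∃ B ∈ S, ¬ B ≤ D := by
    by_contra! h
    have := Submodule.finrank_mono (Finset.sup_le h : S.sup id ≤ D)
    have := hA.finrank_pos
    omega
  have hB := hS B hBS
  have hBD : B ⊓ D = ⊥ := hB.inf_eq_bot_of_not_le hinf D.2 hBD
  have hBDP : B ⊔ (D : Submodule F V) ≤ S.sup id :=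
    sup_le (Finset.le_sup (f := id) hBS) (c.op_le_of_le hAP)
  have hBD_op : ((⟨B, hB.1⟩ ⊡ D : U) : Submodule F V) = B ⊔ D :=
    c.op_eq_sup_of_inf_eq_bot (X := ⟨B, hB.1⟩) hBD
  by_cases hABD : A ≤ B ⊔ D
  · have h : (⟨B, hB.1⟩ : U) ⊡ D = (⟨A, hA.1⟩ : U) ⊡ D := by
      refine Subtype.ext ?_
      rw [hBD_op, le_antisymm hBDP (hDP.symm.trans_le (sup_le le_sup_right hABD)), hDdef,
        c.op_op_cancel_left]
    have hBA : B = A := congrArg Subtype.val (c.op_right_cancel h)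
    exact hAS (hBA ▸ hBS)
  · have hBDU : B ⊔ (D : Submodule F V) ∈ U := hBD_op ▸ (⟨B, hB.1⟩ ⊡ D).2
    have hABD : A ⊓ (B ⊔ D) = ⊥ := hA.inf_eq_bot_of_not_le hinf hBDU hABD
    have := Submodule.finrank_mono (sup_le hAP hBDP : A ⊔ (B ⊔ D) ≤ S.sup id)
    rw [finrank_sup_eq_add_of_inf_eq_bot hABD, finrank_sup_eq_add_of_inf_eq_bot hBD] at this
    have := hB.finrank_pos
    omega

end LinearCodeOp

theorem distrib_sublattice_with_complement_iff_linear_code_general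
    (n : ℕ)
    (F V : Type*) [Field F]
    [AddCommGroup V] [Module F V] [FiniteDimensional F V] (hV : finrank F V = n)
    (U : Set (Submodule F V)) :
    (⊥ ∈ U ∧
      (∀ X ∈ U, ∀ Y ∈ U, X ⊔ Y ∈ U) ∧
      (∀ X ∈ U, ∀ Y ∈ U, X ⊓ Y ∈ U) ∧
      (∀ X ∈ U, ∃ S : Finset (Submodule F V),
        (∀ A ∈ S, A ∈ U ∧ ⊥ < A ∧ ∀ B ∈ U, ⊥ < B → ¬ B < A) ∧ X = S.sup id) ∧
      (∀ X ∈ U, ∀ Y ∈ U, ∀ Z ∈ U, X ⊔ (Y ⊓ Z) = (X ⊔ Y) ⊓ (X ⊔ Z)) ∧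
      (∃ f : U → U, IsComplementFun n U f))
    ↔ (IsLinearCode U ∧ (∀ X ∈ U, ∀ Y ∈ U, X ⊓ Y ∈ U) ∧ (⊤ : Submodule F V) ∈ U) := by
  constructor
  · rintro ⟨h0, hsup, hinf, hatom, hdistr, f, hf⟩
    have hind := atomsIndependent_of_sup_inf_left h0 hsup hinf hdistr
    have htop : (⊤ : Submodule F V) ∈ U := by
      have h : ⊥ ⊔ (f ⟨⊥, h0⟩ : Submodule F V) = ⊤ := (hf.1 ⟨⊥, h0⟩).2
      rw [bot_sup_eq] at h
      exact h ▸ (f ⟨⊥, h0⟩).2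
    exact ⟨hind.isLinearCode h0 hsup hinf hatom, hinf, htop⟩
  · rintro ⟨hcode, hinf, htop⟩
    obtain ⟨c⟩ := hcode.nonempty_linearCodeOp
    have hsup := c.supClosed hinf
    have hatom := c.isAtomisticSet
    exact ⟨c.bot_mem, hsup, hinf, hatom,
      (c.atomsIndependent hinf).sup_inf_left c.bot_mem hsup hinf hatom, _,
      c.isComplementFun_op_top hV htop⟩

/-- A subset `U` of `P_q(n)` containing `{0}`, closed under subspace sum
and intersection, atomistic and distributive as a lattice, and admitting a complement
function, is exactly the same thing as a linear code closed under intersection that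
contains `F_q^n`. -/
theorem distrib_sublattice_with_complement_iff_linear_code
    (q n : ℕ) (hq : IsPrimePow q) (hn : 0 < n)
    (F V : Type*) [Field F] [Fintype F] (hF : Fintype.card F = q)
    [AddCommGroup V] [Module F V] [FiniteDimensional F V] (hV : finrank F V = n)
    (U : Set (Submodule F V)) :
    (⊥ ∈ U ∧
      (∀ X ∈ U, ∀ Y ∈ U, X ⊔ Y ∈ U) ∧
      (∀ X ∈ U, ∀ Y ∈ U, X ⊓ Y ∈ U) ∧
      (∀ X ∈ U, ∃ S : Finset (Submodule F V),
        (∀ A ∈ S, A ∈ U ∧ ⊥ < A ∧ ∀ B ∈ U, ⊥ < B → ¬ B < A) ∧ X = S.sup id) ∧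
      (∀ X ∈ U, ∀ Y ∈ U, ∀ Z ∈ U, X ⊔ (Y ⊓ Z) = (X ⊔ Y) ⊓ (X ⊔ Z)) ∧
      (∃ f : U → U, IsComplementFun n U f))
    ↔ (IsLinearCode U ∧ (∀ X ∈ U, ∀ Y ∈ U, X ⊓ Y ∈ U) ∧ (⊤ : Submodule F V) ∈ U) :=
  distrib_sublattice_with_complement_iff_linear_code_general n F V hV U
end
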